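/- In the setting of the previous factorization, the matrix α satisfies c* J_{p,q} α = 0, where c = (ξ; η) and J_{p,q} = diag(I_p, -I_q). Concretely: ξ*V = 0 and (ξ*ξ/γ)η* - η*(I_q + ηη*/γ) = 0. -/

import Mathlib

open Matrix ComplexOrder

/-- The positive semidefinite square root, as defined in the older Mathlib (removed since). -/
noncomputable def Matrix.PosSemidef.sqrt {n 𝕜 : Type*} [Fintype n] [RCLike 𝕜] [DecidableEq n]
    {A : Matrix n n 𝕜} (hA : A.PosSemidef) : Matrix n n 𝕜 :=
  (hA.1.eigenvectorUnitary : Matrix n n 𝕜) * diagonal ((↑) ∘ (√·) ∘ hA.1.eigenvalues) *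
    (star hA.1.eigenvectorUnitary : Matrix n n 𝕜)

/-!
The first block column of `cᴴ J α` is `ξᴴ V = 0`. For the second, `γ = ξᴴξ - ηᴴη` gives
`ηᴴ M = (ξᴴξ / γ) ηᴴ = ξᴴ (γ⁻¹ ξ ηᴴ)`; writing `M = S * S` with `S = M^{1/2}`, which is invertible
since `M ≥ 1` is positive definite, the second block is `ηᴴ S S S⁻¹ - ηᴴ S = 0`.
-/

namespace Matrix

section Sqrt

variable {n 𝕜 : Type*} [Fintype n] [DecidableEq n] [RCLike 𝕜] {A : Matrix n n 𝕜}

theorem PosSemidef.sqrt_mul_self (hA : A.PosSemidef) : hA.sqrt * hA.sqrt = A := by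
  have hU := Unitary.coe_star_mul_self hA.1.eigenvectorUnitary
  have hD : diagonal (((↑) ∘ (√·) ∘ hA.1.eigenvalues : n → 𝕜)) *
      diagonal ((↑) ∘ (√·) ∘ hA.1.eigenvalues) = diagonal (RCLike.ofReal ∘ hA.1.eigenvalues) := by
    rw [diagonal_mul_diagonal]
    congr 1; funext i
    simp only [Function.comp_apply]
    rw [← RCLike.ofReal_mul, Real.mul_self_sqrt (hA.eigenvalues_nonneg i)]
  conv_rhs => rw [hA.1.spectral_theorem]
  rw [Unitary.conjStarAlgAut_apply, ← hD]
  simp only [PosSemidef.sqrt, Matrix.mul_assoc]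
  rw [← Matrix.mul_assoc _ (hA.1.eigenvectorUnitary : Matrix n n 𝕜), hU, Matrix.one_mul]

theorem PosSemidef.isUnit_sqrt (hA : A.PosSemidef) (hAu : IsUnit A) : IsUnit hA.sqrt := by
  rw [← hA.sqrt_mul_self, isUnit_iff_isUnit_det, det_mul] at hAu
  exact (isUnit_iff_isUnit_det _).mpr (isUnit_of_mul_isUnit_left hAu)

end Sqrt

theorem mul_eq_smul_of_subsingleton {ι m R : Type*} [Subsingleton ι] [Fintype ι] [Semiring R]
    (i : ι) (A : Matrix ι ι R) (B : Matrix ι m R) : A * B = A i i • B := by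
  ext i' j
  rw [mul_apply, Fintype.sum_subsingleton _ i, Subsingleton.elim i' i, smul_apply, smul_eq_mul]

theorem mul_one_add_smul_mul_eq_smul {ι k R : Type*} [Subsingleton ι] [Fintype ι] [Fintype k]
    [DecidableEq k] [CommRing R] (i : ι) (a : R) (x : Matrix k ι R) (y : Matrix ι k R) :
    y * (1 + a • (x * y)) = (1 + a * (y * x) i i) • y := by
  rw [Matrix.mul_add, Matrix.mul_one, Matrix.mul_smul, ← Matrix.mul_assoc,
    mul_eq_smul_of_subsingleton i (y * x), smul_smul, add_smul, one_smul]

theorem posDef_one_add_smul_mul_conjTranspose {m k 𝕜 : Type*} [Fintype m] [DecidableEq m]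
    [Fintype k] [RCLike 𝕜] {a : 𝕜} (ha : 0 ≤ a) (x : Matrix m k 𝕜) :
    (1 + a • (x * xᴴ)).PosDef :=
  PosDef.one.add_posSemidef ((posSemidef_self_mul_conjTranspose x).smul ha)

end Matrix

theorem stmt8_general {n q : ℕ} (ξ : Matrix (Fin (n + 1)) (Fin 1) ℂ) (η : Matrix (Fin q) (Fin 1) ℂ)
    (γ : ℝ) (hγpos : 0 < γ) (hγ : (γ : ℂ) = (ξᴴ * ξ) 0 0 - (ηᴴ * η) 0 0)
    (V : Matrix (Fin (n + 1)) (Fin n) ℂ) (hV : ξᴴ * V = 0)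
    (M : Matrix (Fin q) (Fin q) ℂ) (hMdef : M = 1 + (γ : ℂ)⁻¹ • (η * ηᴴ))
    (hM : M.PosSemidef)
    (α : Matrix (Fin (n + 1) ⊕ Fin q) (Fin n ⊕ Fin q) ℂ)
    (hα : α = fromBlocks V ((γ : ℂ)⁻¹ • (ξ * ηᴴ) * (hM.sqrt)⁻¹) 0 hM.sqrt)
    (c : Matrix (Fin (n + 1) ⊕ Fin q) (Fin 1) ℂ)
    (hc : c = Matrix.of fun i (_ : Fin 1) => Sum.elim (fun i => ξ i 0) (fun j => η j 0) i) :
    cᴴ * fromBlocks (1 : Matrix (Fin (n + 1)) (Fin (n + 1)) ℂ) 0 0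
        (-(1 : Matrix (Fin q) (Fin q) ℂ)) * α = 0 ∧
      (((ξᴴ * ξ) 0 0 / (γ : ℂ)) • ηᴴ - ηᴴ * M) = 0 := by
  have hγne : (γ : ℂ) ≠ 0 := by exact_mod_cast hγpos.ne'
  have hηM : ηᴴ * M = ((ξᴴ * ξ) 0 0 / (γ : ℂ)) • ηᴴ := by
    rw [hMdef, mul_one_add_smul_mul_eq_smul 0]
    congr 1
    field_simp
    linear_combination hγ
  refine ⟨?_, sub_eq_zero.mpr hηM.symm⟩
  have hMunit : IsUnit M := by
    have hγinv : (0 : ℂ) ≤ (γ : ℂ)⁻¹ := inv_nonneg.mpr (by exact_mod_cast hγpos.le)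
    exact hMdef ▸ (posDef_one_add_smul_mul_conjTranspose hγinv η).isUnit
  set S := hM.sqrt
  have hS : IsUnit S.det := (isUnit_iff_isUnit_det S).mp (hM.isUnit_sqrt hMunit)
  have hξB : ξᴴ * ((γ : ℂ)⁻¹ • (ξ * ηᴴ) * S⁻¹) = ηᴴ * S := calc
    _ = ((ξᴴ * ξ) 0 0 / (γ : ℂ)) • ηᴴ * S⁻¹ := by
      rw [← Matrix.mul_assoc, Matrix.mul_smul, ← Matrix.mul_assoc, mul_eq_smul_of_subsingleton 0,
        smul_smul, div_eq_inv_mul]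
    _ = ηᴴ * S * S * S⁻¹ := by rw [← hηM, ← hM.sqrt_mul_self, Matrix.mul_assoc ηᴴ S]
    _ = ηᴴ * S := mul_nonsing_inv_cancel_right _ _ hS
  have hcH : cᴴ = fromCols ξᴴ ηᴴ := by
    rw [← conjTranspose_fromRows_eq_fromCols_conjTranspose, hc]
    congr 1; ext i j; fin_cases j; cases i <;> rfl
  rw [hcH, hα, fromCols_mul_fromBlocks, fromCols_mul_fromBlocks]
  simp only [Matrix.mul_one, Matrix.mul_zero, add_zero, zero_add, Matrix.mul_neg, Matrix.neg_mul,
    hV, hξB, add_neg_cancel, fromCols_zero]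

theorem stmt8 {n q : ℕ} (ξ : Matrix (Fin (n + 1)) (Fin 1) ℂ) (η : Matrix (Fin q) (Fin 1) ℂ)
    (hξ : ξ ≠ 0)
    (γ : ℝ) (hγpos : 0 < γ) (hγ : (γ : ℂ) = (ξᴴ * ξ) 0 0 - (ηᴴ * η) 0 0)
    (V : Matrix (Fin (n + 1)) (Fin n) ℂ) (hV : ξᴴ * V = 0)
    (M : Matrix (Fin q) (Fin q) ℂ) (hMdef : M = 1 + (γ : ℂ)⁻¹ • (η * ηᴴ))
    (hM : M.PosSemidef)
    (α : Matrix (Fin (n + 1) ⊕ Fin q) (Fin n ⊕ Fin q) ℂ)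
    (hα : α = fromBlocks V ((γ : ℂ)⁻¹ • (ξ * ηᴴ) * (hM.sqrt)⁻¹) 0 hM.sqrt)
    (c : Matrix (Fin (n + 1) ⊕ Fin q) (Fin 1) ℂ)
    (hc : c = Matrix.of fun i (_ : Fin 1) => Sum.elim (fun i => ξ i 0) (fun j => η j 0) i) :
    cᴴ * fromBlocks (1 : Matrix (Fin (n + 1)) (Fin (n + 1)) ℂ) 0 0
        (-(1 : Matrix (Fin q) (Fin q) ℂ)) * α = 0 ∧
      (((ξᴴ * ξ) 0 0 / (γ : ℂ)) • ηᴴ - ηᴴ * M) = 0 :=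
  stmt8_general ξ η γ hγpos hγ V hV M hMdef hM α hα c hc
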